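/- Fix real numbers z_1,...,z_n, a real z, and β ∈ [0,1] with ⌈(n+1)β⌉ ≤ n. Then z ≤ Q_β(z_1,...,z_n,∞) if and only if z ≤ Q_β(z_1,...,z_n,z), where Q_β of a multiset of size m is its ⌈mβ⌉-th order statistic (with ∞ counting as the largest element). -/

import Mathlib

open MeasureTheory

/-- A finite family of random variables is exchangeable if its joint law is invariant
under every permutation of the indices. -/
def Exchangeable {Ω : Type*} [MeasurableSpace Ω] (ℙ : Measure Ω) {m : ℕ}
    {α : Type*} [MeasurableSpace α] (Z : Fin m → Ω → α) : Prop :=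
  ∀ σ : Equiv.Perm (Fin m),
    Measure.map (fun ω => fun i => Z (σ i) ω) ℙ = Measure.map (fun ω => fun i => Z i ω) ℙ

/-- The `k`-th order statistic (1-indexed) of a finite tuple of extended reals. -/
noncomputable def orderStatE {m : ℕ} (z : Fin m → EReal) (k : ℕ) : EReal :=
  ((List.ofFn z).mergeSort (fun a b => decide (a ≤ b))).getD (k - 1) ⊥

/-- The `k`-th order statistic (1-indexed) of a finite tuple of reals. -/
noncomputable def orderStat {m : ℕ} (z : Fin m → ℝ) (k : ℕ) : ℝ :=
  ((List.ofFn z).mergeSort (fun a b => decide (a ≤ b))).getD (k - 1) 0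


theorem List.Pairwise.getElem_lt_iff_lt_countP {α : Type*} [LinearOrder α] {l : List α}
    (hl : l.Pairwise (· ≤ ·)) (c : α) {j : ℕ} (hj : j < l.length) :
    l[j] < c ↔ j < l.countP (· < c) := by
  induction l generalizing j with
  | nil => simp at hj
  | cons a t ih =>
    rw [List.pairwise_cons] at hl
    by_cases ha : a < c
    · cases j with
      | zero => simp [ha]
      | succ j => simpa [ha] using ih hl.2 (Nat.lt_of_succ_lt_succ hj)
    · have hle : ∀ x ∈ a :: t, c ≤ x := fun x hx =>
        (not_lt.1 ha).trans (List.forall_mem_cons.2 ⟨le_rfl, hl.1⟩ x hx)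
      have hcount : (a :: t).countP (· < c) = 0 :=
        List.countP_eq_zero.2 fun x hx => by simpa using hle x hx
      simpa [hcount] using hle _ (List.getElem_mem hj)

theorem List.getD_mergeSort_lt_iff {α : Type*} [LinearOrder α] (l : List α) (d c : α) {j : ℕ}
    (hj : j < l.length) :
    (l.mergeSort (fun a b => decide (a ≤ b))).getD j d < c ↔ j < l.countP (· < c) := by
  have hj' : j < (l.mergeSort (fun a b => decide (a ≤ b))).length := by
    rwa [List.length_mergeSort]
  rw [List.getD_eq_getElem _ _ hj',
    (List.pairwise_mergeSort' (· ≤ ·) l).getElem_lt_iff_lt_countP c hj',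
    (List.mergeSort_perm l _).countP_eq]

theorem List.countP_ofFn_snoc {α : Type*} {n : ℕ} (f : Fin n → α) (a : α) (p : α → Bool) :
    (List.ofFn (Fin.snoc f a : Fin (n + 1) → α)).countP p =
      (List.ofFn f).countP p + if p a then 1 else 0 := by
  rw [List.ofFn_succ_last, List.countP_append]
  simp

theorem stmt4_general (n : ℕ) (z : Fin n → ℝ) (zv : ℝ) (β : ℝ)
    (hk : ⌈((n + 1 : ℕ) : ℝ) * β⌉₊ ≤ n) :
    ((zv : EReal) ≤
        orderStatE (Fin.snoc (fun i : Fin n => ((z i : ℝ) : EReal)) ⊤)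
          ⌈((n + 1 : ℕ) : ℝ) * β⌉₊) ↔
      zv ≤ orderStat (Fin.snoc z zv) ⌈((n + 1 : ℕ) : ℝ) * β⌉₊ := by
  -- Past the end, `getD` returns the unrelated defaults `⊥` and `0`.
  have hj : ⌈((n + 1 : ℕ) : ℝ) * β⌉₊ - 1 < n + 1 := by omega
  -- Neither `⊤` nor `zv` itself lies below `zv`, so both samples have the same number of
  -- elements below `zv`, and that number decides the comparison.
  have hcount_top : (List.ofFn (Fin.snoc (fun i : Fin n => ((z i : ℝ) : EReal)) ⊤)).countP
      (· < (zv : EReal)) = (List.ofFn z).countP (· < zv) := by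
    rw [List.countP_ofFn_snoc, ← Function.comp_def, ← List.map_ofFn, List.countP_map]
    simp [Function.comp_def]
  have hcount_self : (List.ofFn (Fin.snoc z zv)).countP (· < zv) =
      (List.ofFn z).countP (· < zv) := by
    rw [List.countP_ofFn_snoc]
    simp
  unfold orderStatE orderStat
  rw [← not_lt, ← not_lt, List.getD_mergeSort_lt_iff _ _ _ (by simpa using hj),
    List.getD_mergeSort_lt_iff _ _ _ (by simpa using hj), hcount_top, hcount_self]

theorem stmt4 (n : ℕ) (z : Fin n → ℝ) (zv : ℝ) (β : ℝ) (hβ : β ∈ Set.Icc (0 : ℝ) 1)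
    (hk : ⌈((n + 1 : ℕ) : ℝ) * β⌉₊ ≤ n) :
    ((zv : EReal) ≤
        orderStatE (Fin.snoc (fun i : Fin n => ((z i : ℝ) : EReal)) ⊤)
          ⌈((n + 1 : ℕ) : ℝ) * β⌉₊) ↔
      zv ≤ orderStat (Fin.snoc z zv) ⌈((n + 1 : ℕ) : ℝ) * β⌉₊ :=
  stmt4_general n z zv β hk
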